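/- Let (X,d) be a separable metric space and μ a locally finite, uniformly locally doubling Borel measure on X. Let γ be a Borel probability measure on X × X whose first marginal π₁♯γ is absolutely continuous with respect to μ, and assume γ is concentrated on a σ-compact set Γ ⊆ X × X (γ(Γ) = 1). For y ∈ X and r > 0 set Γ⁻¹(B(y,r)) := π₁(Γ ∩ (X × B(y,r))). Then each set Γ⁻¹(B(y,r)) is σ-compact (in particular Borel), and γ is concentrated on a set Γ' ⊆ Γ such that for every (x,y) ∈ Γ' and every r > 0, x is a Lebesgue density point of Γ⁻¹(B(y,r)): μ(Γ⁻¹(B(y,r)) ∩ B(x,δ))/μ(B(x,δ)) → 1 as δ → 0⁺. -/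

import Mathlib

/-!
Since `μ` is doubling, Lebesgue's density theorem holds for closed balls, and by continuity of
measure from below it also holds for open balls. For an open set `V`, the set
`Γ⁻¹(V) = π₁(Γ ∩ (X × V))` is σ-compact, hence Borel, so `μ`-almost every point of it is a
density point; as `π₁♯γ ≪ μ`, this fails only on a `γ`-null set of pairs `(x, y)`. Discarding
these null sets for the countably many `V` of a countable basis leaves a full-measure set `Γ'`.
For `(x, y) ∈ Γ'` and `r > 0`, some basic `V` satisfies `y ∈ V ⊆ B(y, r)`; then `x` is a density
point of `Γ⁻¹(V) ⊆ Γ⁻¹(B(y, r))`, and density points of a set are density points of any larger set.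
-/

open MeasureTheory Filter Metric Set Topology TopologicalSpace
open scoped ENNReal

lemma IsSigmaCompact.inter_isOpen {X : Type*} [PseudoEMetricSpace X] {s U : Set X}
    (hs : IsSigmaCompact s) (hU : IsOpen U) : IsSigmaCompact (s ∩ U) := by
  obtain ⟨K, hK, rfl⟩ := hs
  obtain ⟨F, hF, -, rfl, -⟩ := hU.exists_iUnion_isClosed
  rw [iUnion_inter_iUnion]
  exact isSigmaCompact_iUnion _ fun m => isSigmaCompact_iUnion _ fun n =>
    ((hK m).inter_right (hF n)).isSigmaCompact

lemma IsSigmaCompact.measurableSet {X : Type*} [TopologicalSpace X] [T2Space X]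
    [MeasurableSpace X] [OpensMeasurableSpace X] {s : Set X} (hs : IsSigmaCompact s) :
    MeasurableSet s := by
  obtain ⟨K, hK, rfl⟩ := hs
  exact .iUnion fun n => (hK n).measurableSet

lemma measure_inter_div_measure_le_one {X : Type*} [MeasurableSpace X] (μ : Measure X)
    (S T : Set X) : μ (S ∩ T) / μ T ≤ 1 :=
  (ENNReal.div_le_div_right (measure_mono inter_subset_right) _).trans ENNReal.div_self_le_one

section DensityPoint

variable {X : Type*} [PseudoMetricSpace X] [MeasurableSpace X]

def IsLebesgueDensityPoint (μ : Measure X) (S : Set X) (x : X) : Prop :=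
  Tendsto (fun δ : ℝ => μ (S ∩ ball x δ) / μ (ball x δ)) (𝓝[>] 0) (𝓝 1)

lemma measure_ball_eq_iSup_closedBall (μ : Measure X) (x : X) {δ : ℝ} {u : ℕ → ℝ}
    (hu : Monotone u) (hlt : ∀ n, u n < δ) (hlim : Tendsto u atTop (𝓝 δ)) :
    μ (ball x δ) = ⨆ n, μ (closedBall x (u n)) := by
  have hmono : Monotone fun n => closedBall x (u n) := fun m n hmn =>
    closedBall_subset_closedBall (hu hmn)
  rw [← hmono.measure_iUnion]
  congr 1
  ext z
  simp only [mem_ball, mem_iUnion, mem_closedBall]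
  refine ⟨fun hz => ((hlim.eventually (lt_mem_nhds hz)).exists).imp fun _ => le_of_lt,
    fun ⟨n, hn⟩ => hn.trans_lt (hlt n)⟩

lemma IsLebesgueDensityPoint.of_closedBall {μ : Measure X} [IsLocallyFiniteMeasure μ]
    {S : Set X} {x : X}
    (h : Tendsto (fun δ : ℝ => μ (S ∩ closedBall x δ) / μ (closedBall x δ)) (𝓝[>] 0) (𝓝 1)) :
    IsLebesgueDensityPoint μ S x := by
  refine tendsto_order.2 ⟨fun a ha => ?_, fun a ha => .of_forall fun δ =>
    (measure_inter_div_measure_le_one μ S _).trans_lt ha⟩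
  obtain ⟨b, hab, hb⟩ := exists_between ha
  obtain ⟨δ₀, hδ₀, hgood⟩ := (nhdsGT_basis (0 : ℝ)).eventually_iff.1 ((tendsto_order.1 h).1 b hb)
  obtain ⟨δ₁, hδ₁, hfin⟩ := (μ.finiteAt_nhds x).exists_mem_basis nhds_basis_ball
  filter_upwards [Ioo_mem_nhdsGT (lt_min hδ₀ hδ₁)] with δ ⟨hδ, hδlt⟩
  obtain ⟨u, hu, hu_mem, hu_lim⟩ := exists_seq_strictMono_tendsto' hδ
  have hu_good (n : ℕ) : b < μ (S ∩ closedBall x (u n)) / μ (closedBall x (u n)) :=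
    hgood ⟨(hu_mem n).1, (hu_mem n).2.trans (hδlt.trans_le (min_le_left _ _))⟩
  have hu_sub (n : ℕ) : S ∩ closedBall x (u n) ⊆ S ∩ ball x δ :=
    inter_subset_inter_right _ (closedBall_subset_ball (hu_mem n).2)
  have hlower : b * μ (ball x δ) ≤ μ (S ∩ ball x δ) := by
    rw [measure_ball_eq_iSup_closedBall μ x hu.monotone (fun n => (hu_mem n).2) hu_lim,
      ENNReal.mul_iSup]
    exact iSup_le fun n => (ENNReal.mul_le_of_le_div (hu_good n).le).trans
      (measure_mono (hu_sub n))
  have hpos : μ (S ∩ ball x δ) ≠ 0 := fun h0 => by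
    simpa [measure_mono_null (hu_sub 0) h0] using hu_good 0
  have hball_fin : μ (ball x δ) ≠ ∞ :=
    (measure_mono (ball_subset_ball (hδlt.le.trans (min_le_right _ _)))).trans_lt hfin |>.ne
  exact hab.trans_le ((ENNReal.le_div_iff_mul_le (.inr hpos) (.inl hball_fin)).2 hlower)

lemma IsLebesgueDensityPoint.mono {μ : Measure X} {S T : Set X} {x : X}
    (h : IsLebesgueDensityPoint μ S x) (hST : S ⊆ T) : IsLebesgueDensityPoint μ T x :=
  tendsto_of_tendsto_of_tendsto_of_le_of_le h tendsto_const_nhds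
    (fun _ => ENNReal.div_le_div_right (measure_mono (inter_subset_inter_left _ hST)) _)
    (fun _ => measure_inter_div_measure_le_one μ T _)

variable [SecondCountableTopology X] [BorelSpace X]

lemma IsUnifLocDoublingMeasure.ae_isLebesgueDensityPoint (μ : Measure X)
    [IsLocallyFiniteMeasure μ] [IsUnifLocDoublingMeasure μ] (S : Set X) :
    ∀ᵐ x ∂μ.restrict S, IsLebesgueDensityPoint μ S x := by
  filter_upwards [IsUnifLocDoublingMeasure.ae_tendsto_measure_inter_div μ S 1] with x hx
  refine .of_closedBall (hx (fun _ => x) id tendsto_id ?_)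
  filter_upwards [self_mem_nhdsWithin] with δ (hδ : 0 < δ)
  simpa using hδ.le

lemma ae_isLebesgueDensityPoint_fst (μ : Measure X) [IsLocallyFiniteMeasure μ]
    [IsUnifLocDoublingMeasure μ] {γ : Measure (X × X)} (habs : γ.map Prod.fst ≪ μ) {S : Set X}
    (hS : MeasurableSet S) : ∀ᵐ p ∂γ, p.1 ∈ S → IsLebesgueDensityPoint μ S p.1 :=
  ae_of_ae_map measurable_fst.aemeasurable <| habs.ae_le <|
    (ae_restrict_iff' hS).1 (IsUnifLocDoublingMeasure.ae_isLebesgueDensityPoint μ S)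

end DensityPoint

theorem stmt_14_general {X : Type*} [MetricSpace X] [TopologicalSpace.SeparableSpace X]
    [MeasurableSpace X] [BorelSpace X]
    (μ : Measure X) [IsLocallyFiniteMeasure μ] [IsUnifLocDoublingMeasure μ]
    (γ : Measure (X × X))
    (habs : γ.map Prod.fst ≪ μ)
    (Γ : Set (X × X)) (hΓσc : IsSigmaCompact Γ) (hΓ : γ Γ = 1) :
    (∀ (y : X) (r : ℝ),
        IsSigmaCompact (Prod.fst '' (Γ ∩ Set.univ ×ˢ Metric.ball y r))) ∧
      ∃ Γ' : Set (X × X), Γ' ⊆ Γ ∧ MeasurableSet Γ' ∧ γ Γ' = 1 ∧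
        ∀ p ∈ Γ', ∀ r > (0 : ℝ),
          Tendsto
            (fun δ : ℝ =>
              μ (Prod.fst '' (Γ ∩ Set.univ ×ˢ Metric.ball p.2 r) ∩ Metric.ball p.1 δ) /
                μ (Metric.ball p.1 δ))
            (nhdsWithin 0 (Set.Ioi 0)) (nhds 1) := by
  have := UniformSpace.secondCountable_of_separable X
  have hσ (V : Set X) (hV : IsOpen V) : IsSigmaCompact (Prod.fst '' (Γ ∩ univ ×ˢ V)) :=
    (hΓσc.inter_isOpen (isOpen_univ.prod hV)).image continuous_fst
  refine ⟨fun y r => hσ _ isOpen_ball, ?_⟩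
  have hgood : ∀ᵐ p ∂γ, ∀ V ∈ countableBasis X, p.1 ∈ Prod.fst '' (Γ ∩ univ ×ˢ V) →
      IsLebesgueDensityPoint μ (Prod.fst '' (Γ ∩ univ ×ˢ V)) p.1 :=
    (ae_ball_iff (countable_countableBasis X)).2 fun V hV => ae_isLebesgueDensityPoint_fst μ habs
      (hσ V (isOpen_of_mem_countableBasis hV)).measurableSet
  obtain ⟨s, hs, hsm, hsgood⟩ := hgood.exists_measurable_mem
  refine ⟨Γ ∩ s, inter_subset_left, hΓσc.measurableSet.inter hsm, ?_, ?_⟩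
  · rwa [measure_inter_conull (mem_ae_iff.1 hs)]
  rintro ⟨x, y⟩ ⟨hpΓ, hps⟩ r hr
  obtain ⟨V, hV, hyV, hVr⟩ :=
    (isBasis_countableBasis X).exists_subset_of_mem_open (mem_ball_self hr) isOpen_ball
  exact (hsgood _ hps V hV ⟨(x, y), ⟨hpΓ, trivial, hyV⟩, rfl⟩).mono
    (image_mono (inter_subset_inter_right _ (prod_mono_right hVr)))

theorem stmt_14 {X : Type*} [MetricSpace X] [TopologicalSpace.SeparableSpace X]
    [MeasurableSpace X] [BorelSpace X]
    (μ : Measure X) [IsLocallyFiniteMeasure μ] [IsUnifLocDoublingMeasure μ]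
    (γ : Measure (X × X)) [IsProbabilityMeasure γ]
    (habs : γ.map Prod.fst ≪ μ)
    (Γ : Set (X × X)) (hΓσc : IsSigmaCompact Γ) (hΓ : γ Γ = 1) :
    (∀ (y : X) (r : ℝ),
        IsSigmaCompact (Prod.fst '' (Γ ∩ Set.univ ×ˢ Metric.ball y r))) ∧
      ∃ Γ' : Set (X × X), Γ' ⊆ Γ ∧ MeasurableSet Γ' ∧ γ Γ' = 1 ∧
        ∀ p ∈ Γ', ∀ r > (0 : ℝ),
          Tendsto
            (fun δ : ℝ =>
              μ (Prod.fst '' (Γ ∩ Set.univ ×ˢ Metric.ball p.2 r) ∩ Metric.ball p.1 δ) /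
                μ (Metric.ball p.1 δ))
            (nhdsWithin 0 (Set.Ioi 0)) (nhds 1) :=
  stmt_14_general μ γ habs Γ hΓσc hΓ
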